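/- arXiv:2411.05924 — 4 statements merged into one kernel-verified Lean document; each statement's English description precedes it below -/
import Mathlib

section
/- There exists a constant C > 0 such that for every integer n ≥ 1 and every u ∈ L²(0,1), the piecewise-linear projection satisfies ‖𝔍_n u‖_{L²(0,1)} ≤ C ‖u‖_{L²(0,1)}. -/
open MeasureTheory
open scoped ENNReal

/-!
`𝔍_n` is the integral operator with kernel `∑ᵢ 𝔢ᵢ(x) 𝔢ᵢ(y)`. The tents `h_n^{1/2} 𝔢ᵢ` sum to at
most `1`, so `∑ᵢ 𝔢ᵢ ≤ h_n^{-1/2}` pointwise, while `∫ 𝔢ᵢ ≤ 2 h_n^{1/2}` (peak times support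
length). Cauchy–Schwarz, once for each coefficient `∫ u 𝔢ᵢ` and once for the finite sum at each
point, gives `‖𝔍_n u‖₂ ≤ h_n^{-1/2} · 2 h_n^{1/2} · ‖u‖₂ = 2 ‖u‖₂`.
-/

/-- The hat function `𝔢_{i,n}`: continuous, piecewise linear, supported on
`[(i-1)h_n, (i+1)h_n]` with `h_n = 1/(n+1)`, affine on each of the two subintervals,
and with peak value `𝔢_{i,n}(i h_n) = h_n^{-1/2} = √(n+1)`. -/
noncomputable def hatFn (n i : ℕ) : ℝ → ℝ := fun x =>
  Real.sqrt ((n : ℝ) + 1) * max 0 (1 - |((n : ℝ) + 1) * x - (i : ℝ)|)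

/-- The piecewise-linear projection `𝔍_n u = ∑_{i=1}^n (∫₀¹ u 𝔢_{i,n}) 𝔢_{i,n}`. -/
noncomputable def Jn (n : ℕ) (u : ℝ → ℝ) : ℝ → ℝ := fun x =>
  ∑ i ∈ Finset.Icc 1 n, (∫ y in (0:ℝ)..1, u y * hatFn n i y) * hatFn n i x

lemma ENNReal.sq_rpow_inv_two (x : ℝ≥0∞) : (x ^ (2⁻¹ : ℝ)) ^ 2 = x := by
  rw [← ENNReal.rpow_two, ENNReal.rpow_inv_rpow two_ne_zero]

lemma ENNReal.sq_sum_mul_le {ι : Type*} (s : Finset ι) (w f : ι → ℝ≥0∞) :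
    (∑ i ∈ s, w i * f i) ^ 2 ≤ (∑ i ∈ s, w i) * ∑ i ∈ s, w i * f i ^ 2 := by
  have h := ENNReal.inner_le_weight_mul_Lp_of_nonneg s one_le_two w f
  rw [show (1 : ℝ) - 2⁻¹ = 2⁻¹ by norm_num] at h
  simp only [ENNReal.rpow_two] at h
  calc (∑ i ∈ s, w i * f i) ^ 2
      ≤ ((∑ i ∈ s, w i) ^ (2⁻¹ : ℝ) * (∑ i ∈ s, w i * f i ^ 2) ^ (2⁻¹ : ℝ)) ^ 2 := by gcongr
    _ = _ := by rw [mul_pow, ENNReal.sq_rpow_inv_two, ENNReal.sq_rpow_inv_two]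

section

variable {α : Type*} [MeasurableSpace α] {μ : Measure α}

lemma sq_eLpNorm_two {E : Type*} [NormedAddCommGroup E] (f : α → E) :
    eLpNorm f 2 μ ^ 2 = ∫⁻ x, ‖f x‖ₑ ^ 2 ∂μ := by
  simp only [eLpNorm_eq_lintegral_rpow_enorm_toReal two_ne_zero ENNReal.ofNat_ne_top,
    ENNReal.toReal_ofNat, one_div, ENNReal.sq_rpow_inv_two, ENNReal.rpow_two]

lemma sq_lintegral_mul_le {w f : α → ℝ≥0∞} (hw : AEMeasurable w μ) (hf : AEMeasurable f μ) :
    (∫⁻ x, w x * f x ∂μ) ^ 2 ≤ (∫⁻ x, w x ∂μ) * ∫⁻ x, w x * f x ^ 2 ∂μ := by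
  set ν := μ.withDensity w
  have hfν : AEMeasurable f ν := hf.mono' (withDensity_absolutelyContinuous μ w)
  have hHolder := ENNReal.lintegral_mul_le_Lp_mul_Lq ν Real.HolderConjugate.two_two hfν
    aemeasurable_const (g := fun _ => 1)
  simp only [Pi.mul_apply, mul_one, ENNReal.rpow_two, one_pow, lintegral_one, one_div] at hHolder
  calc (∫⁻ x, w x * f x ∂μ) ^ 2 = (∫⁻ x, f x ∂ν) ^ 2 := by
        rw [lintegral_withDensity_eq_lintegral_mul₀ hw hf]; rfl
    _ ≤ ((∫⁻ x, f x ^ 2 ∂ν) ^ (2⁻¹ : ℝ) * ν Set.univ ^ (2⁻¹ : ℝ)) ^ 2 := by gcongr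
    _ = (∫⁻ x, w x ∂μ) * ∫⁻ x, w x * f x ^ 2 ∂μ := by
        rw [mul_pow, ENNReal.sq_rpow_inv_two, ENNReal.sq_rpow_inv_two, mul_comm,
          withDensity_apply _ MeasurableSet.univ, Measure.restrict_univ,
          lintegral_withDensity_eq_lintegral_mul₀ hw (hf.pow_const 2)]
        rfl

lemma sq_enorm_integral_mul_le {u φ : α → ℝ} (hu : AEMeasurable u μ) (hφ : AEMeasurable φ μ) :
    ‖∫ y, u y * φ y ∂μ‖ₑ ^ 2 ≤ (∫⁻ y, ‖φ y‖ₑ ∂μ) * ∫⁻ y, ‖φ y‖ₑ * ‖u y‖ₑ ^ 2 ∂μ := by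
  calc ‖∫ y, u y * φ y ∂μ‖ₑ ^ 2 ≤ (∫⁻ y, ‖φ y‖ₑ * ‖u y‖ₑ ∂μ) ^ 2 := by
        gcongr
        simpa only [enorm_mul, mul_comm] using enorm_integral_le_lintegral_enorm fun y => u y * φ y
    _ ≤ _ := sq_lintegral_mul_le hφ.enorm hu.enorm

theorem eLpNorm_sum_integral_mul_le {ι : Type*} (s : Finset ι) {φ : ι → α → ℝ} {A B : ℝ≥0∞}
    (hφ : ∀ i ∈ s, AEMeasurable (φ i) μ) (hA : ∀ x, ∑ i ∈ s, ‖φ i x‖ₑ ≤ A)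
    (hB : ∀ i ∈ s, ∫⁻ x, ‖φ i x‖ₑ ∂μ ≤ B) {u : α → ℝ} (hu : AEMeasurable u μ) :
    eLpNorm (fun x => ∑ i ∈ s, (∫ y, u y * φ i y ∂μ) * φ i x) 2 μ ≤ A * B * eLpNorm u 2 μ := by
  set c : ι → ℝ := fun i => ∫ y, u y * φ i y ∂μ
  have hpointwise : ∀ x, ‖∑ i ∈ s, c i * φ i x‖ₑ ^ 2 ≤ A * ∑ i ∈ s, ‖φ i x‖ₑ * ‖c i‖ₑ ^ 2 := by
    intro x
    calc ‖∑ i ∈ s, c i * φ i x‖ₑ ^ 2 ≤ (∑ i ∈ s, ‖φ i x‖ₑ * ‖c i‖ₑ) ^ 2 := by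
          gcongr
          simpa only [enorm_mul, mul_comm] using enorm_sum_le s fun i => c i * φ i x
      _ ≤ (∑ i ∈ s, ‖φ i x‖ₑ) * ∑ i ∈ s, ‖φ i x‖ₑ * ‖c i‖ₑ ^ 2 := ENNReal.sq_sum_mul_le _ _ _
      _ ≤ _ := by gcongr; exact hA x
  have hφu : ∀ i ∈ s, AEMeasurable (fun y => ‖φ i y‖ₑ * ‖u y‖ₑ ^ 2) μ :=
    fun i hi => (hφ i hi).enorm.mul (hu.enorm.pow_const 2)
  rw [← ENNReal.pow_le_pow_left_iff two_ne_zero, mul_pow, sq_eLpNorm_two, sq_eLpNorm_two]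
  calc ∫⁻ x, ‖∑ i ∈ s, c i * φ i x‖ₑ ^ 2 ∂μ
      ≤ ∫⁻ x, A * ∑ i ∈ s, ‖φ i x‖ₑ * ‖c i‖ₑ ^ 2 ∂μ := lintegral_mono hpointwise
    _ = A * ∑ i ∈ s, (∫⁻ x, ‖φ i x‖ₑ ∂μ) * ‖c i‖ₑ ^ 2 := by
        rw [lintegral_const_mul'' _ (Finset.aemeasurable_fun_sum s fun i hi =>
          ((hφ i hi).enorm.mul_const _)), lintegral_finsetSum' s fun i hi =>
          (hφ i hi).enorm.mul_const _]
        congr 1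
        exact Finset.sum_congr rfl fun i _ => lintegral_mul_const' _ _ (by simp)
    _ ≤ A * ∑ i ∈ s, B * (B * ∫⁻ y, ‖φ i y‖ₑ * ‖u y‖ₑ ^ 2 ∂μ) := by
        gcongr with i hi
        · exact hB i hi
        · exact (sq_enorm_integral_mul_le hu (hφ i hi)).trans (by gcongr; exact hB i hi)
    _ = A * B ^ 2 * ∫⁻ y, (∑ i ∈ s, ‖φ i y‖ₑ) * ‖u y‖ₑ ^ 2 ∂μ := by
        simp only [Finset.sum_mul]
        rw [lintegral_finsetSum' s hφu, ← Finset.mul_sum, ← Finset.mul_sum]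
        ring
    _ ≤ A * B ^ 2 * ∫⁻ y, A * ‖u y‖ₑ ^ 2 ∂μ := by gcongr with y; exact hA y
    _ = (A * B) ^ 2 * ∫⁻ y, ‖u y‖ₑ ^ 2 ∂μ := by
        rw [lintegral_const_mul'' _ (hu.enorm.pow_const 2)]
        ring

end

lemma sum_tent_le_one (s : Finset ℤ) (t : ℝ) : ∑ i ∈ s, max 0 (1 - |t - i|) ≤ 1 := by
  set tent : ℤ → ℝ := fun i => max 0 (1 - |t - i|)
  set m := ⌊t⌋
  have hm : (m : ℝ) ≤ t := Int.floor_le t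
  have hm' : t < m + 1 := Int.lt_floor_add_one t
  have hsupport : {i ∈ s | tent i ≠ 0} ⊆ {m, m + 1} := by
    intro i hi
    replace hi := (Finset.mem_filter.1 hi).2
    contrapose! hi
    simp only [Finset.mem_insert, Finset.mem_singleton, not_or] at hi
    refine max_eq_left (sub_nonpos.2 ?_)
    rcases lt_or_gt_of_ne hi.1 with h | h
    · have : (i : ℝ) + 1 ≤ m := by exact_mod_cast h
      rw [abs_of_nonneg (by linarith)]; linarith
    · have : (m : ℝ) + 2 ≤ i := by exact_mod_cast (by omega : m + 2 ≤ i)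
      rw [abs_of_nonpos (by linarith)]; linarith
  calc ∑ i ∈ s, tent i = ∑ i ∈ s with tent i ≠ 0, tent i := (Finset.sum_filter_ne_zero s).symm
    _ ≤ ∑ i ∈ {m, m + 1}, tent i :=
        Finset.sum_le_sum_of_subset_of_nonneg hsupport fun _ _ _ => le_max_left _ _
    _ = 1 := by
        rw [Finset.sum_pair (by omega)]
        simp only [tent, Int.cast_add, Int.cast_one]
        rw [abs_of_nonneg (by linarith), abs_of_nonpos (by linarith),
          max_eq_right (by linarith), max_eq_right (by linarith)]
        ring

lemma hatFn_nonneg (n i : ℕ) (x : ℝ) : 0 ≤ hatFn n i x :=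
  mul_nonneg (Real.sqrt_nonneg _) (le_max_left _ _)

lemma continuous_hatFn (n i : ℕ) : Continuous (hatFn n i) := by
  unfold hatFn
  fun_prop

lemma sum_enorm_hatFn_le (n : ℕ) (x : ℝ) :
    ∑ i ∈ Finset.Icc 1 n, ‖hatFn n i x‖ₑ ≤ ENNReal.ofReal √((n : ℝ) + 1) := by
  simp only [Real.enorm_of_nonneg (hatFn_nonneg _ _ _)]
  rw [← ENNReal.ofReal_sum_of_nonneg fun i _ => hatFn_nonneg n i x]
  refine ENNReal.ofReal_le_ofReal ?_
  have htent := sum_tent_le_one ((Finset.Icc 1 n).map Nat.castEmbedding) ((n + 1) * x)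
  simp only [Finset.sum_map, Nat.castEmbedding_apply, Int.cast_natCast] at htent
  simpa only [hatFn, ← Finset.mul_sum] using
    mul_le_of_le_one_right (Real.sqrt_nonneg _) htent

lemma enorm_hatFn_le_indicator (n i : ℕ) (x : ℝ) :
    ‖hatFn n i x‖ₑ ≤ (Set.Ioo (((i : ℝ) - 1) / (n + 1)) ((i + 1) / (n + 1))).indicator
      (fun _ => ENNReal.ofReal √((n : ℝ) + 1)) x := by
  have hN : (0 : ℝ) < n + 1 := by positivity
  rw [Real.enorm_of_nonneg (hatFn_nonneg n i x)]
  by_cases hx : x ∈ Set.Ioo (((i : ℝ) - 1) / (n + 1)) ((i + 1) / (n + 1))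
  · rw [Set.indicator_of_mem hx]
    refine ENNReal.ofReal_le_ofReal (mul_le_of_le_one_right (Real.sqrt_nonneg _) ?_)
    exact max_le zero_le_one (by linarith [abs_nonneg ((n + 1) * x - i : ℝ)])
  · rw [Set.indicator_of_notMem hx, nonpos_iff_eq_zero, ENNReal.ofReal_eq_zero]
    have hfar : 1 ≤ |(n + 1) * x - i| := by
      contrapose! hx
      obtain ⟨h₁, h₂⟩ := abs_sub_lt_iff.1 hx
      exact ⟨(div_lt_iff₀ hN).2 (by linarith), (lt_div_iff₀ hN).2 (by linarith)⟩
    simp [hatFn, hfar]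

lemma lintegral_enorm_hatFn_le (n i : ℕ) :
    ∫⁻ x in Set.Ioo 0 1, ‖hatFn n i x‖ₑ ≤
      ENNReal.ofReal √((n : ℝ) + 1) * ENNReal.ofReal (2 / (n + 1)) := by
  calc ∫⁻ x in Set.Ioo 0 1, ‖hatFn n i x‖ₑ ≤ ∫⁻ x, ‖hatFn n i x‖ₑ := setLIntegral_le_lintegral _ _
    _ ≤ ∫⁻ x, (Set.Ioo (((i : ℝ) - 1) / (n + 1)) ((i + 1) / (n + 1))).indicator
          (fun _ => ENNReal.ofReal √((n : ℝ) + 1)) x := lintegral_mono (enorm_hatFn_le_indicator n i)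
    _ = _ := by
        rw [lintegral_indicator_const measurableSet_Ioo, Real.volume_Ioo]
        congr 2
        field_simp
        ring

/-- There exists `C > 0` such that for every `n ≥ 1` and every `u ∈ L²(0,1)`,
`‖𝔍_n u‖_{L²(0,1)} ≤ C ‖u‖_{L²(0,1)}`. -/
theorem stmt4 :
    ∃ C : ℝ, 0 < C ∧ ∀ n : ℕ, 1 ≤ n → ∀ u : ℝ → ℝ,
      MemLp u 2 (volume.restrict (Set.Ioo (0:ℝ) 1)) →
      eLpNorm (Jn n u) 2 (volume.restrict (Set.Ioo (0:ℝ) 1)) ≤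
        ENNReal.ofReal C * eLpNorm u 2 (volume.restrict (Set.Ioo (0:ℝ) 1)) := by
  refine ⟨2, two_pos, fun n _ u hu => ?_⟩
  have hJn : Jn n u = fun x => ∑ i ∈ Finset.Icc 1 n,
      (∫ y in Set.Ioo 0 1, u y * hatFn n i y) * hatFn n i x := by
    ext x
    simp only [Jn, intervalIntegral.integral_of_le zero_le_one, integral_Ioc_eq_integral_Ioo]
  have hAB : ENNReal.ofReal √((n : ℝ) + 1) *
      (ENNReal.ofReal √((n : ℝ) + 1) * ENNReal.ofReal (2 / (n + 1))) = ENNReal.ofReal 2 := by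
    rw [← ENNReal.ofReal_mul (by positivity), ← ENNReal.ofReal_mul (by positivity),
      ← mul_assoc, Real.mul_self_sqrt (by positivity), mul_div_cancel₀ _ (by positivity)]
  rw [hJn, ← hAB]
  exact eLpNorm_sum_integral_mul_le _ (fun i _ => (continuous_hatFn n i).aemeasurable)
    (sum_enorm_hatFn_le n) (fun i _ => lintegral_enorm_hatFn_le n i) hu.aemeasurable
end

section
/- There exists a constant C > 0, independent of n, such that for every integer n ≥ 1 and all vectors v, w ∈ ℝⁿ, (v⊙w)ᵀ L_n^{−1} (v⊙w) ≤ C · (vᵀ L_n^{−1} v) · (wᵀ L_n w), where v⊙w ∈ ℝⁿ denotes the entrywise (Hadamard) product. (Discrete pointwise-product estimate ‖v⊙w‖_{𝐇^{−1}_n} ≲ ‖v‖_{𝐇^{−1}_n}‖w‖_{𝐇^1_n}.) -/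
/-!
With `u = L⁻¹ (v ⊙ w)` one has `‖v ⊙ w‖²_{H⁻¹} = ⟪v, u ⊙ w⟫ ≤ ‖v‖_{H⁻¹} ‖u ⊙ w‖_{H¹}` by
Cauchy–Schwarz for the `L`-inner product, so it suffices that multiplication by `w` is bounded on
`H¹` with norm `≲ ‖w‖_{H¹}`. Writing `L = (n+1)² DᵀD` with `D` the forward difference, this is the
discrete Leibniz rule `Δ(XY)_k = X_{k+1} ΔY_k + ΔX_k Y_k` combined with the discrete Sobolev
bound `X_j² ≤ (n+1) ∑ (ΔX)²`, valid because `X` vanishes at the left boundary.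
-/

/-- The discrete Dirichlet Laplacian `L_n`: the `n×n` symmetric tridiagonal matrix with
diagonal entries `2/h_n² = 2(n+1)²` and subdiagonal and superdiagonal entries
`-1/h_n² = -(n+1)²`, where `h_n = 1/(n+1)`. -/
noncomputable def Ldisc (n : ℕ) : Matrix (Fin n) (Fin n) ℝ := fun i j =>
  if i = j then 2 * ((n : ℝ) + 1) ^ 2
  else if i.1 + 1 = j.1 ∨ j.1 + 1 = i.1 then -(((n : ℝ) + 1) ^ 2)
  else 0

open Matrix Finset

section Duality

variable {ι : Type*} [Fintype ι]

theorem Matrix.PosSemidef.dotProduct_mulVec_sq_le {A : Matrix ι ι ℝ} (hA : A.PosSemidef)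
    (x y : ι → ℝ) : (x ⬝ᵥ A *ᵥ y) ^ 2 ≤ (x ⬝ᵥ A *ᵥ x) * (y ⬝ᵥ A *ᵥ y) := by
  let _ := A.toSeminormedAddCommGroup hA
  let _ := A.toInnerProductSpace hA
  have h : ((A *ᵥ y) ⬝ᵥ star x) * ((A *ᵥ y) ⬝ᵥ star x)
      ≤ ((A *ᵥ x) ⬝ᵥ star x) * ((A *ᵥ y) ⬝ᵥ star y) := real_inner_mul_inner_self_le x y
  simpa only [star_trivial, sq, dotProduct_comm _ x, dotProduct_comm _ y] using h

theorem Matrix.PosDef.dotProduct_inv_mulVec_le_of_forall [DecidableEq ι] {A M : Matrix ι ι ℝ}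
    (hA : A.PosDef) (hM : Mᵀ = M) {K : ℝ} (hK : 0 ≤ K)
    (hbound : ∀ u, (M *ᵥ u) ⬝ᵥ A *ᵥ (M *ᵥ u) ≤ K * (u ⬝ᵥ A *ᵥ u)) (v : ι → ℝ) :
    (M *ᵥ v) ⬝ᵥ A⁻¹ *ᵥ (M *ᵥ v) ≤ K * (v ⬝ᵥ A⁻¹ *ᵥ v) := by
  have hAinv : ∀ x, A *ᵥ (A⁻¹ *ᵥ x) = x := fun x => by
    rw [mulVec_mulVec, mul_nonsing_inv _ (A.isUnit_iff_isUnit_det.mp hA.isUnit), one_mulVec]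
  set u := A⁻¹ *ᵥ (M *ᵥ v)
  set b := A⁻¹ *ᵥ v
  have hX : (M *ᵥ v) ⬝ᵥ u = u ⬝ᵥ A *ᵥ u := by rw [← hAinv (M *ᵥ v), dotProduct_comm]
  have hY : v ⬝ᵥ b = b ⬝ᵥ A *ᵥ b := by rw [hAinv v, dotProduct_comm]
  have hdual : (M *ᵥ v) ⬝ᵥ u = (M *ᵥ u) ⬝ᵥ A *ᵥ b := by
    rw [hAinv v, dotProduct_comm, dotProduct_mulVec, ← mulVec_transpose, hM, dotProduct_comm]
  have hYnn : 0 ≤ b ⬝ᵥ A *ᵥ b := by simpa using hA.posSemidef.dotProduct_mulVec_nonneg b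
  have hsq : (u ⬝ᵥ A *ᵥ u) ^ 2 ≤ (u ⬝ᵥ A *ᵥ u) * (K * (b ⬝ᵥ A *ᵥ b)) :=
    calc (u ⬝ᵥ A *ᵥ u) ^ 2 = ((M *ᵥ u) ⬝ᵥ A *ᵥ b) ^ 2 := by rw [← hX, hdual]
      _ ≤ ((M *ᵥ u) ⬝ᵥ A *ᵥ (M *ᵥ u)) * (b ⬝ᵥ A *ᵥ b) :=
        hA.posSemidef.dotProduct_mulVec_sq_le _ _
      _ ≤ K * (u ⬝ᵥ A *ᵥ u) * (b ⬝ᵥ A *ᵥ b) := by gcongr; exact hbound u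
      _ = (u ⬝ᵥ A *ᵥ u) * (K * (b ⬝ᵥ A *ᵥ b)) := by ring
  rw [hX, hY]
  nlinarith [mul_nonneg hK hYnn]

end Duality

section DiscreteEnergy

def discreteEnergy (X : ℕ → ℝ) (N : ℕ) : ℝ := ∑ k ∈ range N, (X (k + 1) - X k) ^ 2

theorem discreteEnergy_nonneg (X : ℕ → ℝ) (N : ℕ) : 0 ≤ discreteEnergy X N :=
  sum_nonneg fun _ _ => sq_nonneg _

theorem discreteEnergy_mono (X : ℕ → ℝ) : Monotone (discreteEnergy X) := fun _ _ h =>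
  sum_le_sum_of_subset_of_nonneg (range_subset_range.2 h) fun _ _ _ => sq_nonneg _

theorem sq_le_mul_discreteEnergy {X : ℕ → ℝ} (h0 : X 0 = 0) {j N : ℕ} (hj : j ≤ N) :
    X j ^ 2 ≤ N * discreteEnergy X N := by
  have htel : X j = ∑ k ∈ range j, (X (k + 1) - X k) := by
    rw [sum_range_sub, h0, sub_zero]
  calc X j ^ 2 ≤ j * discreteEnergy X j := by
        simpa [htel, discreteEnergy] using
          sq_sum_le_card_mul_sum_sq (s := range j) (f := fun k => X (k + 1) - X k)
    _ ≤ N * discreteEnergy X N := mul_le_mul (Nat.cast_le.2 hj) (discreteEnergy_mono X hj)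
        (discreteEnergy_nonneg X j) (Nat.cast_nonneg N)

theorem discreteEnergy_mul_le {X Y : ℕ → ℝ} (hX : X 0 = 0) (hY : Y 0 = 0) (N : ℕ) :
    discreteEnergy (fun k => X k * Y k) N
      ≤ 4 * N * discreteEnergy X N * discreteEnergy Y N := by
  set EX := discreteEnergy X N
  set EY := discreteEnergy Y N
  have hterm : ∀ k ∈ range N, (X (k + 1) * Y (k + 1) - X k * Y k) ^ 2
      ≤ 2 * N * EX * (Y (k + 1) - Y k) ^ 2 + 2 * N * EY * (X (k + 1) - X k) ^ 2 := by
    intro k hk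
    have hXk : X (k + 1) ^ 2 ≤ N * EX := sq_le_mul_discreteEnergy hX (mem_range.1 hk)
    have hYk : Y k ^ 2 ≤ N * EY := sq_le_mul_discreteEnergy hY (mem_range.1 hk).le
    have hleibniz : X (k + 1) * Y (k + 1) - X k * Y k
        = X (k + 1) * (Y (k + 1) - Y k) + (X (k + 1) - X k) * Y k := by ring
    rw [hleibniz]
    nlinarith [sq_nonneg (X (k + 1) * (Y (k + 1) - Y k) - (X (k + 1) - X k) * Y k),
      mul_le_mul_of_nonneg_right hXk (sq_nonneg (Y (k + 1) - Y k)),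
      mul_le_mul_of_nonneg_right hYk (sq_nonneg (X (k + 1) - X k))]
  calc discreteEnergy (fun k => X k * Y k) N
      ≤ ∑ k ∈ range N,
          (2 * N * EX * (Y (k + 1) - Y k) ^ 2 + 2 * N * EY * (X (k + 1) - X k) ^ 2) :=
        sum_le_sum hterm
    _ = 4 * N * EX * EY := by
        rw [sum_add_distrib, ← mul_sum, ← mul_sum]
        simp only [EX, EY, discreteEnergy]
        ring

end DiscreteEnergy

section Ldisc

variable {n : ℕ}

/-- `x` in the paper's indexing `x₁, …, xₙ`, extended by the boundary values `x₀ = xₙ₊₁ = 0`. -/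
def zeroExtend (x : Fin n → ℝ) : ℕ → ℝ
  | 0 => 0
  | j + 1 => if h : j < n then x ⟨j, h⟩ else 0

theorem zeroExtend_succ (x : Fin n → ℝ) (i : Fin n) : zeroExtend x (i + 1) = x i := by
  simp [zeroExtend]

theorem zeroExtend_mul (x y : Fin n → ℝ) :
    zeroExtend (fun i => x i * y i) = fun j => zeroExtend x j * zeroExtend y j := by
  funext j
  cases j with
  | zero => simp [zeroExtend]
  | succ j => simp only [zeroExtend]; split_ifs <;> simp

def diffMat (n : ℕ) : Matrix (Fin (n + 1)) (Fin n) ℝ := fun k i =>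
  (if k = i.castSucc then 1 else 0) - (if k = i.succ then 1 else 0)

theorem diffMat_mulVec (x : Fin n → ℝ) (k : Fin (n + 1)) :
    (diffMat n *ᵥ x) k = zeroExtend x (k + 1) - zeroExtend x k := by
  have hcast : ∑ i, (if k = i.castSucc then x i else 0) = zeroExtend x (k + 1) := by
    induction k using Fin.lastCases with
    | last => simp [zeroExtend, fun i : Fin n => (Fin.castSucc_ne_last i).symm]
    | cast j => simp [zeroExtend_succ]
  have hsucc : ∑ i, (if k = i.succ then x i else 0) = zeroExtend x k := by
    induction k using Fin.cases with
    | zero => simp [zeroExtend, fun i : Fin n => (Fin.succ_ne_zero i).symm]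
    | succ j => simp [zeroExtend_succ]
  simp only [mulVec, dotProduct, diffMat, sub_mul, ite_mul, one_mul, zero_mul, sum_sub_distrib,
    hcast, hsucc]

theorem diffMat_mulVec_injective : Function.Injective (diffMat n).mulVec := by
  intro x y hxy
  have hdiff (k : Fin (n + 1)) :
      zeroExtend x (k + 1) - zeroExtend x k = zeroExtend y (k + 1) - zeroExtend y k := by
    rw [← diffMat_mulVec, ← diffMat_mulVec, hxy]
  have hext (j : ℕ) (hj : j ≤ n) : zeroExtend x j = zeroExtend y j := by
    induction j with
    | zero => rfl
    | succ j ih => linarith [hdiff ⟨j, by omega⟩, ih (by omega)]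
  funext i
  simpa [zeroExtend_succ] using hext (i + 1) i.isLt

theorem Ldisc_eq_smul_transpose_mul :
    Ldisc n = ((n : ℝ) + 1) ^ 2 • ((diffMat n)ᵀ * diffMat n) := by
  ext i j
  simp only [Ldisc, diffMat, Matrix.smul_apply, mul_apply, transpose_apply, smul_eq_mul, sub_mul,
    mul_sub, ite_mul, one_mul, zero_mul, sum_sub_distrib, sum_ite_eq', mem_univ, if_true]
  simp only [Fin.ext_iff, Fin.val_castSucc, Fin.val_succ]
  split_ifs <;> first | (exfalso; omega) | ring

theorem Ldisc_posDef : (Ldisc n).PosDef := by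
  rw [Ldisc_eq_smul_transpose_mul, ← conjTranspose_eq_transpose_of_trivial]
  exact (PosDef.conjTranspose_mul_self _ diffMat_mulVec_injective).smul (by positivity)

theorem dotProduct_Ldisc_mulVec_self (x : Fin n → ℝ) :
    x ⬝ᵥ Ldisc n *ᵥ x = ((n : ℝ) + 1) ^ 2 * discreteEnergy (zeroExtend x) (n + 1) := by
  rw [Ldisc_eq_smul_transpose_mul, smul_mulVec, dotProduct_smul, ← mulVec_mulVec,
    dotProduct_mulVec, vecMul_transpose, smul_eq_mul, discreteEnergy,
    ← Fin.sum_univ_eq_sum_range (fun k => (zeroExtend x (k + 1) - zeroExtend x k) ^ 2)]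
  simp only [dotProduct, diffMat_mulVec, sq]

theorem dotProduct_Ldisc_mulVec_mul_le (u w : Fin n → ℝ) :
    (fun i => u i * w i) ⬝ᵥ Ldisc n *ᵥ (fun i => u i * w i)
      ≤ 4 * (u ⬝ᵥ Ldisc n *ᵥ u) * (w ⬝ᵥ Ldisc n *ᵥ w) := by
  simp only [dotProduct_Ldisc_mulVec_self, zeroExtend_mul]
  set EU := discreteEnergy (zeroExtend u) (n + 1)
  set EW := discreteEnergy (zeroExtend w) (n + 1)
  have hprod := discreteEnergy_mul_le (X := zeroExtend u) (Y := zeroExtend w) rfl rfl (n + 1)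
  have hEUW : 0 ≤ EU * EW := mul_nonneg (discreteEnergy_nonneg _ _) (discreteEnergy_nonneg _ _)
  have hn : (1 : ℝ) ≤ (n : ℝ) + 1 := le_add_of_nonneg_left n.cast_nonneg
  push_cast at hprod
  calc ((n : ℝ) + 1) ^ 2 * discreteEnergy (fun j => zeroExtend u j * zeroExtend w j) (n + 1)
      ≤ ((n : ℝ) + 1) ^ 2 * (4 * ((n : ℝ) + 1) * EU * EW) := by gcongr
    _ = 4 * ((n : ℝ) + 1) ^ 3 * (EU * EW) := by ring
    _ ≤ 4 * ((n : ℝ) + 1) ^ 4 * (EU * EW) := by gcongr; norm_num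
    _ = 4 * (((n : ℝ) + 1) ^ 2 * EU) * (((n : ℝ) + 1) ^ 2 * EW) := by ring

end Ldisc

/-- Discrete pointwise-product estimate `‖v⊙w‖_{𝐇⁻¹ₙ} ≲ ‖v‖_{𝐇⁻¹ₙ} ‖w‖_{𝐇¹ₙ}`:
there is `C > 0`, independent of `n`, such that for all `n ≥ 1` and `v, w ∈ ℝⁿ`,
`(v⊙w)ᵀ Lₙ⁻¹ (v⊙w) ≤ C (vᵀ Lₙ⁻¹ v)(wᵀ Lₙ w)`, with `⊙` the entrywise product. -/
theorem stmt9 :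
    ∃ C : ℝ, 0 < C ∧ ∀ n : ℕ, 1 ≤ n → ∀ v w : Fin n → ℝ,
      dotProduct (fun i => v i * w i)
          (Matrix.mulVec (Ldisc n)⁻¹ (fun i => v i * w i)) ≤
        C * (dotProduct v (Matrix.mulVec (Ldisc n)⁻¹ v)) *
          (dotProduct w (Matrix.mulVec (Ldisc n) w)) := by
  refine ⟨4, by norm_num, fun n _ v w => ?_⟩
  have hdiag (u : Fin n → ℝ) : (fun i => u i * w i) = diagonal w *ᵥ u := by
    funext i
    rw [mulVec_diagonal, mul_comm]
  have hW : 0 ≤ w ⬝ᵥ Ldisc n *ᵥ w := by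
    simpa using Ldisc_posDef.posSemidef.dotProduct_mulVec_nonneg w
  rw [hdiag, mul_right_comm]
  refine Ldisc_posDef.dotProduct_inv_mulVec_le_of_forall (diagonal_transpose w) (by positivity)
    (fun u => ?_) v
  rw [← hdiag, mul_right_comm]
  exact dotProduct_Ldisc_mulVec_mul_le u w
end

section
/- There exists a constant C > 0, independent of n, such that for every integer n ≥ 1 and all k, ℓ ∈ {1,…,n}, (m_{k,n}⊙m_{ℓ,n})ᵀ L_n^{−1} (m_{k,n}⊙m_{ℓ,n}) ≤ (C/n) · λ_{k,n}^{−1} · λ_{ℓ,n} · k²(k²+ℓ²) / ( ℓ²(1 + (k+ℓ)² + (k²−ℓ²)²) ), where ⊙ denotes the entrywise product of vectors in ℝⁿ. -/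
/-- The eigenvalue `λ_{k,n} = (4/h_n²) sin²(kπ h_n / 2) = 4(n+1)² sin²(kπ/(2(n+1)))`. -/
noncomputable def lamE (n k : ℕ) : ℝ :=
  4 * ((n : ℝ) + 1) ^ 2 * Real.sin ((k : ℝ) * Real.pi / (2 * ((n : ℝ) + 1))) ^ 2

/-- The eigenvector `m_{k,n} ∈ ℝⁿ` with entries `m_{k,n}(i) = √(2 h_n) sin(kπ i h_n)`
for `i = 1,…,n` (here indexed by `Fin n`, the `i`-th coordinate being `i+1`). -/
noncomputable def mvec (n k : ℕ) : Fin n → ℝ := fun i =>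
  Real.sqrt (2 / ((n : ℝ) + 1)) * Real.sin ((k : ℝ) * Real.pi * ((i : ℝ) + 1) / ((n : ℝ) + 1))

/-! By the product-to-sum formula, `v = m_k ⊙ m_ℓ` is
`(cos (|k - ℓ| π x) - cos ((k + ℓ) π x)) / (n + 1)` on the grid `x = i / (n + 1)`. Grid cosines
are eigenfunctions of the second difference, so `L_n⁻¹ v` is explicit: each cosine divided by its
eigenvalue, plus an affine correction for the Dirichlet boundary values (a parabola for the
constant mode when `k = ℓ`). With `d = max (|k - ℓ|, 1)` and `λ_m ≥ 4 min (m, 2(n + 1) - m)²`, this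
gives `|L_n⁻¹ v| ≤ 1 / ((n + 1) d²)` entrywise, while `|v| ≤ 2 / (n + 1)`, so the quadratic form is
at most `2 / (n d²)`. The right-hand side is at least `2C / (3π² n d²)`, as `λ_k ≤ π² k²`,
`λ_ℓ ≥ 4 ℓ²` and `(k² - ℓ²)² ≤ d² (k + ℓ)²`. -/

open Real Matrix

/-- A function `g` on `{0, …, n + 1}` stands for the vector `(g 1, …, g n)` padded with the
boundary values `g 0` and `g (n + 1)`; on vectors with zero boundary values this is `L_n`. -/
noncomputable def secondDiff (n : ℕ) (g : ℕ → ℝ) (j : ℕ) : ℝ :=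
  ((n : ℝ) + 1) ^ 2 * (2 * g (j + 1) - g j - g (j + 2))

theorem Ldisc_mulVec_eq_secondDiff (n : ℕ) {g : ℕ → ℝ} (h0 : g 0 = 0) (hn : g (n + 1) = 0) :
    Ldisc n *ᵥ (fun j : Fin n => g (j + 1)) = fun i : Fin n => secondDiff n g i := by
  funext i
  have row : ∀ j : Fin n, Ldisc n i j * g (j + 1) = ((n : ℝ) + 1) ^ 2 *
      (2 * (if j = i then g (j + 1) else 0) - (if j.1 + 1 = i then g (j + 1) else 0)
        - (if j.1 = i + 1 then g (j + 1) else 0)) := by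
    intro j
    simp only [Ldisc, Fin.ext_iff]
    split_ifs <;> first | omega | ring
  have left : ∑ j : Fin n, (if j.1 + 1 = i then g (j + 1) else 0) = g i := by
    rcases Nat.eq_zero_or_eq_succ_pred i.1 with hi | hi
    · rw [hi, h0]
      exact Finset.sum_eq_zero fun j _ => if_neg (by omega)
    · rw [Finset.sum_eq_single_of_mem ⟨i.1 - 1, by omega⟩ (Finset.mem_univ _)
        fun j _ hj => if_neg fun h => hj (Fin.ext (by simp; omega))]
      simp only [Nat.sub_add_cancel (by omega : 1 ≤ i.1), if_true]
  have right : ∑ j : Fin n, (if j.1 = i + 1 then g (j + 1) else 0) = g (i + 2) := by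
    by_cases hi : i.1 + 1 < n
    · rw [Finset.sum_eq_single_of_mem ⟨i.1 + 1, hi⟩ (Finset.mem_univ _)
        fun j _ hj => if_neg fun h => hj (Fin.ext h)]
      simp
    · rw [show i.1 + 2 = n + 1 by omega, hn]
      exact Finset.sum_eq_zero fun j _ => if_neg (by omega)
  simp only [mulVec, dotProduct, row, ← Finset.mul_sum, Finset.sum_sub_distrib,
    Finset.sum_ite_eq', Finset.mem_univ, if_true, left, right, secondDiff]

theorem eq_zero_of_secondDiff_eq_zero (n : ℕ) {g : ℕ → ℝ} (h0 : g 0 = 0) (hn : g (n + 1) = 0)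
    (h : ∀ i < n, secondDiff n g i = 0) : ∀ j ≤ n + 1, g j = 0 := by
  have step : ∀ i < n, g (i + 2) = 2 * g (i + 1) - g i := fun i hi => by
    have := h i hi
    simp only [secondDiff, mul_eq_zero] at this
    linarith [this.resolve_left (by positivity)]
  have linear : ∀ j ≤ n, g j = j * g 1 ∧ g (j + 1) = (j + 1) * g 1 := by
    intro j hj
    induction j with
    | zero => simp [h0]
    | succ j ih =>
      obtain ⟨h1, h2⟩ := ih (by omega)
      refine ⟨by push_cast; exact h2, ?_⟩
      rw [step j (by omega), h1, h2]
      push_cast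
      ring
  have hg1 : g 1 = 0 := by
    have := (linear n le_rfl).2
    rw [hn] at this
    exact (mul_eq_zero.1 this.symm).resolve_left (by positivity)
  intro j hj
  rcases j with _ | j
  · exact h0
  · rw [(linear j (by omega)).2, hg1, mul_zero]

theorem Ldisc_mulVec_injective (n : ℕ) : Function.Injective (Ldisc n *ᵥ ·) := by
  refine fun a b hab => sub_eq_zero.1 ?_
  set x := a - b
  let g : ℕ → ℝ := fun j => if h : j ≠ 0 ∧ j ≤ n then x ⟨j - 1, by omega⟩ else 0
  have hgx : (fun j : Fin n => g (j + 1)) = x := by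
    funext j
    simp [g, Nat.succ_le_of_lt j.2]
  have hx : Ldisc n *ᵥ x = 0 := by
    simp only [x, mulVec_sub, hab, sub_self]
  have hsd : ∀ i < n, secondDiff n g i = 0 := fun i hi => by
    have := congrFun (Ldisc_mulVec_eq_secondDiff n (g := g) (by simp [g]) (by simp [g]))
      (⟨i, hi⟩ : Fin n)
    rw [hgx, hx] at this
    exact this.symm
  funext j
  rw [← hgx]
  exact eq_zero_of_secondDiff_eq_zero n (by simp [g]) (by simp [g]) hsd _ (by omega)

theorem Ldisc_inv_mulVec_secondDiff (n : ℕ) {g : ℕ → ℝ} (h0 : g 0 = 0) (hn : g (n + 1) = 0) :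
    (Ldisc n)⁻¹ *ᵥ (fun i : Fin n => secondDiff n g i) = fun j : Fin n => g (j + 1) := by
  have hdet : IsUnit (Ldisc n).det :=
    (isUnit_iff_isUnit_det _).1 (mulVec_injective_iff_isUnit.1 (Ldisc_mulVec_injective n))
  rw [← Ldisc_mulVec_eq_secondDiff n h0 hn, mulVec_mulVec, nonsing_inv_mul _ hdet, one_mulVec]

theorem lamE_eq_one_sub_cos (n m : ℕ) :
    lamE n m = 2 * ((n : ℝ) + 1) ^ 2 * (1 - cos (m * π / ((n : ℝ) + 1))) := by
  rw [lamE, sin_sq, cos_sq, show 2 * ((m : ℝ) * π / (2 * ((n : ℝ) + 1))) = m * π / ((n : ℝ) + 1)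
    by field_simp]
  ring

theorem secondDiff_cos (n m j : ℕ) :
    secondDiff n (fun j => cos (m * π * j / ((n : ℝ) + 1))) j
      = lamE n m * cos (m * π * ((j : ℝ) + 1) / ((n : ℝ) + 1)) := by
  set t := m * π / ((n : ℝ) + 1)
  set x := m * π * ((j : ℝ) + 1) / ((n : ℝ) + 1)
  have prev : m * π * ((j : ℕ) : ℝ) / ((n : ℝ) + 1) = x - t := by ring
  have next : m * π * ((j + 2 : ℕ) : ℝ) / ((n : ℝ) + 1) = x + t := by push_cast; ring
  simp only [secondDiff, prev, next, lamE_eq_one_sub_cos, cos_sub, cos_add]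
  push_cast
  ring

/-- The cosine mode divided by its eigenvalue, corrected by an affine function so that it vanishes
at `0` and `n + 1`; for `m = 0` the eigenvalue vanishes and a parabola takes its place. -/
noncomputable def cosSolution (n m j : ℕ) : ℝ :=
  if m = 0 then j * ((n : ℝ) + 1 - j) / (2 * ((n : ℝ) + 1) ^ 2)
  else (cos (m * π * j / ((n : ℝ) + 1)) - 1 + (1 - cos (m * π)) * j / ((n : ℝ) + 1)) / lamE n m

theorem cosSolution_zero (n m : ℕ) : cosSolution n m 0 = 0 := by
  simp [cosSolution]

theorem cosSolution_succ_self (n m : ℕ) : cosSolution n m (n + 1) = 0 := by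
  have hN : (n : ℝ) + 1 ≠ 0 := by positivity
  simp only [cosSolution, Nat.cast_add, Nat.cast_one, mul_div_cancel_right₀ _ hN]
  split_ifs <;> ring

theorem div_le_sin_mul_pi_div {N x : ℝ} (hN : 0 < N) (hx : 0 ≤ x) (hxN : x ≤ N) :
    x / N ≤ sin (x * π / (2 * N)) := by
  have h := mul_le_sin (x := x * π / (2 * N)) (by positivity) (by
    rw [div_le_div_iff₀ (by positivity) (by norm_num)]; nlinarith [pi_pos])
  rwa [show 2 / π * (x * π / (2 * N)) = x / N by field_simp] at h

theorem four_mul_sq_le_lamE {n m d : ℕ} (hdm : d ≤ m) (hdm' : d + m ≤ 2 * (n + 1)) :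
    4 * (d : ℝ) ^ 2 ≤ lamE n m := by
  have hN : (0 : ℝ) < n + 1 := by positivity
  have hdm : (d : ℝ) ≤ m := by exact_mod_cast hdm
  have hdm' : (d : ℝ) + m ≤ 2 * (n + 1) := by exact_mod_cast hdm'
  have hsin : d / ((n : ℝ) + 1) ≤ sin (m * π / (2 * ((n : ℝ) + 1))) := by
    rcases le_total (m : ℝ) (n + 1) with hm | hm
    · exact (div_le_div_of_nonneg_right hdm hN.le).trans
        (div_le_sin_mul_pi_div hN (by positivity) hm)
    · have h := div_le_sin_mul_pi_div hN (x := 2 * ((n : ℝ) + 1) - m) (by linarith) (by linarith)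
      rw [show (2 * ((n : ℝ) + 1) - m) * π / (2 * ((n : ℝ) + 1)) = π - m * π / (2 * ((n : ℝ) + 1))
        by field_simp, sin_pi_sub] at h
      exact (div_le_div_of_nonneg_right (by linarith) hN.le).trans h
  have hsq := pow_le_pow_left₀ (by positivity) hsin 2
  rw [div_pow, div_le_iff₀ (by positivity)] at hsq
  rw [lamE]
  linarith

theorem lamE_pos {n m : ℕ} (hm : 1 ≤ m) (hmn : m ≤ 2 * n + 1) : 0 < lamE n m :=
  lt_of_lt_of_le (by norm_num) (four_mul_sq_le_lamE (d := 1) hm (by omega))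

theorem lamE_le_pi_sq_mul_sq (n m : ℕ) : lamE n m ≤ π ^ 2 * (m : ℝ) ^ 2 := by
  have hN : (0 : ℝ) < n + 1 := by positivity
  calc lamE n m ≤ 4 * ((n : ℝ) + 1) ^ 2 * (m * π / (2 * ((n : ℝ) + 1))) ^ 2 :=
        mul_le_mul_of_nonneg_left sin_sq_le_sq (by positivity)
    _ = π ^ 2 * (m : ℝ) ^ 2 := by field_simp; ring

theorem secondDiff_cosSolution {n m : ℕ} (hm : m ≤ 2 * n + 1) (j : ℕ) :
    secondDiff n (cosSolution n m) j = cos (m * π * ((j : ℝ) + 1) / ((n : ℝ) + 1)) := by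
  have hN : (n : ℝ) + 1 ≠ 0 := by positivity
  rcases Nat.eq_zero_or_pos m with rfl | hm0
  · simp only [secondDiff, cosSolution, if_true, Nat.cast_zero, zero_mul, zero_div, cos_zero]
    push_cast
    field_simp
    ring
  · have hlam := (lamE_pos hm0 hm).ne'
    have hcos := secondDiff_cos n m j
    simp only [secondDiff, cosSolution, if_neg hm0.ne'] at hcos ⊢
    push_cast at hcos ⊢
    field_simp
    linear_combination hcos

theorem abs_cosSolution_le {n m d j : ℕ} (hd : 1 ≤ d) (hdm : d ≤ max m 1)
    (hdm' : d + m ≤ 2 * (n + 1)) (hj : j ≤ n + 1) :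
    |cosSolution n m j| ≤ 1 / (2 * (d : ℝ) ^ 2) := by
  have hN : (0 : ℝ) < n + 1 := by positivity
  set x := (j : ℝ) / ((n : ℝ) + 1)
  have hx0 : 0 ≤ x := by positivity
  have hx1 : x ≤ 1 := by
    rw [div_le_one hN]; exact_mod_cast hj
  rcases Nat.eq_zero_or_pos m with rfl | hm0
  · obtain rfl : d = 1 := by omega
    have hval : cosSolution n 0 j = x * (1 - x) / 2 := by
      simp only [cosSolution, if_true, x]; field_simp
    rw [hval, abs_of_nonneg (by nlinarith)]
    norm_num
    nlinarith
  · have hlam := four_mul_sq_le_lamE (n := n) (show d ≤ m by omega) hdm'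
    have hval : cosSolution n m j
        = (cos (m * π * j / ((n : ℝ) + 1)) - 1 + (1 - cos (m * π)) * x) / lamE n m := by
      simp only [cosSolution, if_neg hm0.ne', x]; ring
    rw [hval, abs_div, abs_of_pos (lt_of_lt_of_le (by positivity) hlam), div_le_div_iff₀
      (lt_of_lt_of_le (by positivity) hlam) (by positivity)]
    have hnum : |cos (m * π * j / ((n : ℝ) + 1)) - 1 + (1 - cos (m * π)) * x| ≤ 2 := by
      rw [abs_le]
      constructor <;> nlinarith [cos_le_one (m * π * j / ((n : ℝ) + 1)),
        neg_one_le_cos (m * π * j / ((n : ℝ) + 1)), cos_le_one (m * π), neg_one_le_cos (m * π)]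
    nlinarith [abs_nonneg (cos (m * π * j / ((n : ℝ) + 1)) - 1 + (1 - cos (m * π)) * x)]

theorem mvec_mul_mvec (n K L : ℕ) (i : Fin n) :
    mvec n K i * mvec n L i = (cos (((K : ℤ) - L).natAbs * π * ((i : ℝ) + 1) / ((n : ℝ) + 1))
      - cos ((K + L : ℕ) * π * ((i : ℝ) + 1) / ((n : ℝ) + 1))) / ((n : ℝ) + 1) := by
  have hsq : √(2 / ((n : ℝ) + 1)) * √(2 / ((n : ℝ) + 1)) = 2 / ((n : ℝ) + 1) :=
    mul_self_sqrt (by positivity)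
  have hcos : cos (((K : ℤ) - L).natAbs * π * ((i : ℝ) + 1) / ((n : ℝ) + 1))
      = cos ((K * π * ((i : ℝ) + 1) / ((n : ℝ) + 1)) - L * π * ((i : ℝ) + 1) / ((n : ℝ) + 1)) := by
    have hc : 0 ≤ π * ((i : ℝ) + 1) / ((n : ℝ) + 1) := by positivity
    rw [Nat.cast_natAbs, Int.cast_abs, Int.cast_sub, Int.cast_natCast, Int.cast_natCast,
      mul_assoc, mul_div_assoc, ← abs_of_nonneg hc, ← abs_mul, cos_abs]
    ring_nf
  rw [hcos, Nat.cast_add, add_mul, add_mul, add_div, cos_sub, cos_add, mvec, mvec]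
  linear_combination (sin (K * π * ((i : ℝ) + 1) / ((n : ℝ) + 1))
    * sin (L * π * ((i : ℝ) + 1) / ((n : ℝ) + 1))) * hsq

theorem abs_mvec_mul_mvec_le (n K L : ℕ) (i : Fin n) :
    |mvec n K i * mvec n L i| ≤ 2 / ((n : ℝ) + 1) := by
  have hm : ∀ M, |mvec n M i| ≤ √(2 / ((n : ℝ) + 1)) := fun M => by
    rw [mvec, abs_mul, abs_of_nonneg (sqrt_nonneg _)]
    exact mul_le_of_le_one_right (sqrt_nonneg _) (abs_sin_le_one _)
  rw [abs_mul, ← mul_self_sqrt (show 0 ≤ 2 / ((n : ℝ) + 1) by positivity)]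
  exact mul_le_mul (hm K) (hm L) (abs_nonneg _) (sqrt_nonneg _)

theorem dotProduct_le_card_mul {ι : Type*} [Fintype ι] {v w : ι → ℝ} {a b : ℝ}
    (hv : ∀ i, |v i| ≤ a) (hw : ∀ i, |w i| ≤ b) : v ⬝ᵥ w ≤ Fintype.card ι * (a * b) := by
  rw [← nsmul_eq_mul]
  refine Finset.sum_le_card_nsmul _ _ _ fun i _ => ?_
  calc v i * w i ≤ |v i| * |w i| := (le_abs_self _).trans (abs_mul _ _).le
    _ ≤ a * b := mul_le_mul (hv i) (hw i) (abs_nonneg _) ((abs_nonneg _).trans (hv i))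

theorem dotProduct_Ldisc_inv_mvec_mul_mvec_le {n K L : ℕ} (hK : 1 ≤ K) (hKn : K ≤ n)
    (hLn : L ≤ n) :
    (fun i => mvec n K i * mvec n L i) ⬝ᵥ (Ldisc n)⁻¹ *ᵥ (fun i => mvec n K i * mvec n L i)
      ≤ 2 / (n * (max ((K : ℤ) - L).natAbs 1 : ℕ) ^ 2) := by
  set D := ((K : ℤ) - L).natAbs
  set d := max D 1
  have hN : (0 : ℝ) < n + 1 := by positivity
  set w : ℕ → ℝ := fun j => (cosSolution n D j - cosSolution n (K + L) j) / ((n : ℝ) + 1)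
  have hw : (fun i => mvec n K i * mvec n L i) = fun i : Fin n => secondDiff n w i := by
    funext i
    have hD := secondDiff_cosSolution (n := n) (m := D) (by omega) i
    have hS := secondDiff_cosSolution (n := n) (m := K + L) (by omega) i
    simp only [secondDiff, w] at hD hS ⊢
    rw [mvec_mul_mvec, ← hD, ← hS]
    ring
  have hwi : ∀ i : Fin n, |w (i + 1)| ≤ 1 / ((n + 1) * (d : ℝ) ^ 2) := fun i => by
    have hD := abs_cosSolution_le (n := n) (m := D) (d := d) (j := i + 1) (by omega) le_rfl
      (by omega) (by omega)
    have hS := abs_cosSolution_le (n := n) (m := K + L) (d := d) (j := i + 1) (by omega)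
      (by omega) (by omega) (by omega)
    calc |w (i + 1)| ≤ (1 / (2 * (d : ℝ) ^ 2) + 1 / (2 * (d : ℝ) ^ 2)) / ((n : ℝ) + 1) := by
          rw [abs_div, abs_of_pos hN]
          gcongr
          exact (abs_sub _ _).trans (add_le_add hD hS)
      _ = 1 / ((n + 1) * (d : ℝ) ^ 2) := by field_simp; ring
  rw [hw, Ldisc_inv_mulVec_secondDiff n (by simp [w, cosSolution_zero])
    (by simp [w, cosSolution_succ_self]), ← hw]
  refine (dotProduct_le_card_mul (abs_mvec_mul_mvec_le n K L) hwi).trans ?_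
  have hn : (1 : ℝ) ≤ n := by exact_mod_cast hK.trans hKn
  calc (Fintype.card (Fin n) : ℝ) * (2 / ((n : ℝ) + 1) * (1 / ((n + 1) * (d : ℝ) ^ 2)))
      = 2 * n / ((n + 1) ^ 2 * (d : ℝ) ^ 2) := by rw [Fintype.card_fin]; field_simp
    _ ≤ 2 / (n * (d : ℝ) ^ 2) := by
      rw [div_le_div_iff₀ (by positivity) (by positivity)]
      nlinarith

theorem two_div_le_of_eigenvalue_bounds {n A B a b d : ℝ} (hn : 0 < n) (hA0 : 0 < A)
    (hA : A ≤ π ^ 2 * a ^ 2) (hB : 4 * b ^ 2 ≤ B) (ha : 1 ≤ a) (hb : 1 ≤ b) (hab : |a - b| ≤ d)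
    (hd : 1 ≤ d) :
    2 / (n * d ^ 2) ≤
      30 / n * A⁻¹ * B * (a ^ 2 * (a ^ 2 + b ^ 2)) /
        (b ^ 2 * (1 + (a + b) ^ 2 + (a ^ 2 - b ^ 2) ^ 2)) := by
  have hs : 1 ≤ (a + b) ^ 2 := by nlinarith
  have hQ : 1 + (a + b) ^ 2 + (a ^ 2 - b ^ 2) ^ 2 ≤ 3 * d ^ 2 * (a + b) ^ 2 := by
    have hdiff : (a - b) ^ 2 ≤ d ^ 2 := by
      rw [← sq_abs]; exact pow_le_pow_left₀ (abs_nonneg _) hab 2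
    have hd2 : 1 ≤ d ^ 2 := by nlinarith
    nlinarith [mul_le_mul_of_nonneg_right hdiff (sq_nonneg (a + b)),
      mul_le_mul_of_nonneg_right hd2 (sq_nonneg (a + b))]
  have hpi : π ^ 2 ≤ 10 := by nlinarith [pi_lt_d2, pi_pos]
  rw [show 30 / n * A⁻¹ * B * (a ^ 2 * (a ^ 2 + b ^ 2)) /
        (b ^ 2 * (1 + (a + b) ^ 2 + (a ^ 2 - b ^ 2) ^ 2))
      = 30 * B * (a ^ 2 * (a ^ 2 + b ^ 2)) /
        (n * A * (b ^ 2 * (1 + (a + b) ^ 2 + (a ^ 2 - b ^ 2) ^ 2))) by field_simp,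
    div_le_div_iff₀ (by positivity) (by positivity)]
  calc 2 * (n * A * (b ^ 2 * (1 + (a + b) ^ 2 + (a ^ 2 - b ^ 2) ^ 2)))
      ≤ 2 * (n * (π ^ 2 * a ^ 2) * (b ^ 2 * (3 * d ^ 2 * (a + b) ^ 2))) := by gcongr
    _ ≤ 30 * (4 * b ^ 2) * (a ^ 2 * ((a + b) ^ 2 / 2)) * (n * d ^ 2) := by
      have : 0 ≤ n * a ^ 2 * b ^ 2 * d ^ 2 * (a + b) ^ 2 := by positivity
      nlinarith
    _ ≤ 30 * B * (a ^ 2 * (a ^ 2 + b ^ 2)) * (n * d ^ 2) := by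
      have hsum : (a + b) ^ 2 / 2 ≤ a ^ 2 + b ^ 2 := by nlinarith [sq_nonneg (a - b)]
      have hB0 : 0 ≤ B := by nlinarith
      gcongr

/-- There is `C > 0`, independent of `n`, such that for every `n ≥ 1` and all
`k, ℓ ∈ {1,…,n}`,
`(m_{k,n}⊙m_{ℓ,n})ᵀ Lₙ⁻¹ (m_{k,n}⊙m_{ℓ,n})
  ≤ (C/n) λ_{k,n}⁻¹ λ_{ℓ,n} k²(k²+ℓ²) / (ℓ²(1+(k+ℓ)²+(k²-ℓ²)²))`,
with `⊙` the entrywise product. -/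
theorem stmt10 :
    ∃ C : ℝ, 0 < C ∧ ∀ n : ℕ, 1 ≤ n → ∀ k l : Fin n,
      dotProduct (fun i => mvec n (k.1 + 1) i * mvec n (l.1 + 1) i)
          (Matrix.mulVec (Ldisc n)⁻¹ (fun i => mvec n (k.1 + 1) i * mvec n (l.1 + 1) i)) ≤
        (C / n) * (lamE n (k.1 + 1))⁻¹ * lamE n (l.1 + 1) *
          (((k.1 : ℝ) + 1) ^ 2 * (((k.1 : ℝ) + 1) ^ 2 + ((l.1 : ℝ) + 1) ^ 2)) /
          (((l.1 : ℝ) + 1) ^ 2 *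
            (1 + (((k.1 : ℝ) + 1) + ((l.1 : ℝ) + 1)) ^ 2 +
              (((k.1 : ℝ) + 1) ^ 2 - ((l.1 : ℝ) + 1) ^ 2) ^ 2)) := by
  refine ⟨30, by norm_num, fun n hn k l => ?_⟩
  set d := max (((k.1 + 1 : ℕ) : ℤ) - (l.1 + 1 : ℕ)).natAbs 1
  have hdist : |((k.1 : ℝ) + 1) - ((l.1 : ℝ) + 1)| ≤ d := by
    have h : |((k.1 : ℝ) + 1) - ((l.1 : ℝ) + 1)|
        = ((((k.1 + 1 : ℕ) : ℤ) - (l.1 + 1 : ℕ)).natAbs : ℝ) := by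
      rw [Nat.cast_natAbs, Int.cast_abs]
      push_cast
      rfl
    exact h.le.trans (Nat.cast_le.2 (le_max_left _ _))
  calc _ ≤ 2 / (n * (d : ℝ) ^ 2) :=
        dotProduct_Ldisc_inv_mvec_mul_mvec_le (by omega) k.2 l.2
    _ ≤ _ := by
      have h := two_div_le_of_eigenvalue_bounds (Nat.cast_pos.2 hn)
        (lamE_pos (n := n) (m := k.1 + 1) (by omega) (by omega)) (lamE_le_pi_sq_mul_sq n (k.1 + 1))
        (four_mul_sq_le_lamE (n := n) (m := l.1 + 1) le_rfl (by omega))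
        (by simp) (by simp) (by push_cast; exact hdist) (by exact_mod_cast le_max_right _ 1)
      push_cast at h
      exact h
end

section
/- For all integers n ≥ 1 and p ≥ 1, the sum Σ_{i=1}^n sin(pπi/(n+1)) equals 0 if p is even, and equals cot(pπ/(2(n+1))) if p is odd. (In the odd case sin(pπ/(2(n+1))) ≠ 0, so the cotangent is well defined.) -/
/-!
With `θ = pπ/(n+1)` the terms are `sin (iθ)`. Replacing `i` by `n + 1 - i` turns the term into
`sin (pπ - iθ) = (-1)^(p+1) sin (iθ)`, so for even `p` the sum is its own negative. For odd `p`,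
multiplying by `2 sin (θ/2)` makes the sum telescope to `cos (θ/2) - cos (pπ - θ/2) = 2 cos (θ/2)`,
and `sin (θ/2) ≠ 0` because `θ/2 = pπ/(2(n+1))` is not a multiple of `π`.
-/

open Real Finset

theorem Finset.sum_Icc_one_reflect {M : Type*} [AddCommMonoid M] (f : ℕ → M) (n : ℕ) :
    ∑ i ∈ Icc 1 n, f (n + 1 - i) = ∑ i ∈ Icc 1 n, f i :=
  sum_nbij' (fun i ↦ n + 1 - i) (fun i ↦ n + 1 - i)
    (fun i hi ↦ by simp only [mem_Icc] at hi ⊢; omega)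
    (fun i hi ↦ by simp only [mem_Icc] at hi ⊢; omega)
    (fun i hi ↦ by simp only [mem_Icc] at hi; omega)
    (fun i hi ↦ by simp only [mem_Icc] at hi; omega)
    (fun _ _ ↦ rfl)

theorem Finset.sum_Icc_one_eq_zero_of_reflect_eq_neg {R : Type*} [NonAssocRing R]
    [NoZeroDivisors R] [CharZero R] {f : ℕ → R} {n : ℕ}
    (hf : ∀ i ∈ Icc 1 n, f (n + 1 - i) = -f i) : ∑ i ∈ Icc 1 n, f i = 0 := by
  have h := sum_Icc_one_reflect f n
  rw [sum_congr rfl hf, sum_neg_distrib] at h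
  exact CharZero.neg_eq_self_iff.mp h

theorem Real.two_mul_sin_half_mul_sum_sin (θ : ℝ) (n : ℕ) :
    2 * sin (θ / 2) * ∑ i ∈ Icc 1 n, sin (i * θ) = cos (θ / 2) - cos ((n + 1 / 2) * θ) := by
  induction n with
  | zero => simp [div_eq_inv_mul]
  | succ n ih =>
    rw [sum_Icc_succ_top (by omega), mul_add, ih, two_mul_sin_mul_sin, ← cos_neg (θ / 2 - _)]
    push_cast
    ring_nf

theorem Real.sin_natCast_mul_pi_div_ne_zero {p m : ℕ} (hm : m ≠ 0) (hpm : ¬ m ∣ p) :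
    sin (p * π / m) ≠ 0 := by
  refine sin_ne_zero_iff.mpr fun k hk ↦ hpm ?_
  field_simp at hk
  exact Int.natCast_dvd_natCast.mp ⟨k, by exact_mod_cast (by linarith : (p : ℝ) = m * k)⟩

theorem stmt13_general (n p : ℕ) :
    (Even p →
      ∑ i ∈ Finset.Icc 1 n, Real.sin ((p : ℝ) * Real.pi * (i : ℝ) / ((n : ℝ) + 1)) = 0) ∧
    (¬ Even p →
      Real.sin ((p : ℝ) * Real.pi / (2 * ((n : ℝ) + 1))) ≠ 0 ∧
      ∑ i ∈ Finset.Icc 1 n, Real.sin ((p : ℝ) * Real.pi * (i : ℝ) / ((n : ℝ) + 1)) =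
        Real.cos ((p : ℝ) * Real.pi / (2 * ((n : ℝ) + 1))) /
          Real.sin ((p : ℝ) * Real.pi / (2 * ((n : ℝ) + 1)))) := by
  set θ := (p : ℝ) * π / (n + 1) with hθ
  have hterm (i : ℕ) : (p : ℝ) * π * i / (n + 1) = i * θ := by rw [hθ]; ring
  have hhalf : (p : ℝ) * π / (2 * (n + 1)) = θ / 2 := by rw [hθ, div_div, mul_comm 2]
  have hcomplement (x : ℝ) : ((n : ℝ) + 1 - x) * θ = p * π - x * θ := by rw [hθ]; field_simp
  simp only [hterm, hhalf]
  constructor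
  · intro hp
    refine sum_Icc_one_eq_zero_of_reflect_eq_neg fun i hi ↦ ?_
    rw [Nat.cast_sub (by simp only [mem_Icc] at hi; omega), Nat.cast_add_one, hcomplement,
      sin_nat_mul_pi_sub, hp.neg_one_pow, one_mul]
  · intro hp
    have hsin : sin (θ / 2) ≠ 0 := by
      have hdvd : ¬ 2 * (n + 1) ∣ p := fun h ↦ hp (even_iff_two_dvd.mpr (dvd_of_mul_right_dvd h))
      simpa [← hhalf] using sin_natCast_mul_pi_div_ne_zero (by omega) hdvd
    refine ⟨hsin, eq_div_of_mul_eq hsin ?_⟩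
    have htelescope := two_mul_sin_half_mul_sum_sin θ n
    rw [show ((n : ℝ) + 1 / 2) * θ = (n + 1 - 1 / 2) * θ by ring, hcomplement, one_div_mul_eq_div,
      cos_nat_mul_pi_sub, (Nat.not_even_iff_odd.mp hp).neg_one_pow] at htelescope
    linarith

/-- For integers `n ≥ 1` and `p ≥ 1`, the sum `∑_{i=1}^n sin(pπi/(n+1))` equals `0`
if `p` is even, and equals `cot(pπ/(2(n+1))) = cos(pπ/(2(n+1)))/sin(pπ/(2(n+1)))`
if `p` is odd; in the odd case `sin(pπ/(2(n+1))) ≠ 0`, so the cotangent is well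
defined. -/
theorem stmt13 (n p : ℕ) (hn : 1 ≤ n) (hp : 1 ≤ p) :
    (Even p →
      ∑ i ∈ Finset.Icc 1 n, Real.sin ((p : ℝ) * Real.pi * (i : ℝ) / ((n : ℝ) + 1)) = 0) ∧
    (¬ Even p →
      Real.sin ((p : ℝ) * Real.pi / (2 * ((n : ℝ) + 1))) ≠ 0 ∧
      ∑ i ∈ Finset.Icc 1 n, Real.sin ((p : ℝ) * Real.pi * (i : ℝ) / ((n : ℝ) + 1)) =
        Real.cos ((p : ℝ) * Real.pi / (2 * ((n : ℝ) + 1))) /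
          Real.sin ((p : ℝ) * Real.pi / (2 * ((n : ℝ) + 1)))) :=
  stmt13_general n p
end
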